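/- Let H, φ, φ' be real numbers with φ' = −6φH³ + ε·√((6φH³)² + 3H²) where ε = 1 or ε = −1. Then 2 − 8Hφφ' + 24H⁴φ² > 0. -/

import Mathlib

/-!
The root `φ'` of the quadratic formula satisfies the Hamiltonian constraint
`φ'² + 12 H³ φ φ' = 3 H²`. Substituting `12 H³ φ φ' = 3 H² - φ'²` gives the identity
`3 H² (2 - 8 H φ φ' + 24 H⁴ φ²) = 2 φ'² + 72 H⁶ φ²`, so the quantity is positive when
`H φ ≠ 0`, and it equals `2` when `H φ = 0`.
-/

theorem sq_add_two_mul_eq_of_eq_neg_add_mul_sqrt {p b c ε : ℝ} (hε : ε ^ 2 = 1)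
    (hbc : 0 ≤ b ^ 2 + c) (hp : p = -b + ε * Real.sqrt (b ^ 2 + c)) :
    p ^ 2 + 2 * b * p = c := by
  have hsq : (p + b) ^ 2 = b ^ 2 + c := by
    rw [hp, neg_add_cancel_comm, mul_pow, hε, one_mul, Real.sq_sqrt hbc]
  linear_combination hsq

theorem hamiltonian_constraint_of_eq_root {H φ φ' ε : ℝ} (hε : ε = 1 ∨ ε = -1)
    (hφ' : φ' = -6 * φ * H ^ 3 + ε * Real.sqrt ((6 * φ * H ^ 3) ^ 2 + 3 * H ^ 2)) :
    φ' ^ 2 + 12 * H ^ 3 * φ * φ' = 3 * H ^ 2 := by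
  have hε2 : ε ^ 2 = 1 := by rcases hε with rfl | rfl <;> norm_num
  have hdisc : 0 ≤ (6 * φ * H ^ 3) ^ 2 + 3 * H ^ 2 := by positivity
  have hroot : φ' = -(6 * φ * H ^ 3) + ε * Real.sqrt ((6 * φ * H ^ 3) ^ 2 + 3 * H ^ 2) := by
    rw [hφ', neg_mul, neg_mul]
  linear_combination sq_add_two_mul_eq_of_eq_neg_add_mul_sqrt hε2 hdisc hroot

theorem denom_pos_of_hamiltonian_constraint {H φ φ' : ℝ}
    (hc : φ' ^ 2 + 12 * H ^ 3 * φ * φ' = 3 * H ^ 2) :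
    2 - 8 * H * φ * φ' + 24 * H ^ 4 * φ ^ 2 > 0 := by
  by_cases hHφ : H * φ = 0
  · have h0 : H * φ * φ' = 0 := by rw [hHφ, zero_mul]
    have h4 : H ^ 4 * φ ^ 2 = 0 := by linear_combination (H ^ 3 * φ) * hHφ
    linarith
  · have hH : H ≠ 0 := left_ne_zero_of_mul hHφ
    have hid : 3 * H ^ 2 * (2 - 8 * H * φ * φ' + 24 * H ^ 4 * φ ^ 2)
        = 2 * φ' ^ 2 + 72 * (H ^ 2 * (H * φ)) ^ 2 := by
      linear_combination (-2) * hc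
    have hpos : 0 < 3 * H ^ 2 * (2 - 8 * H * φ * φ' + 24 * H ^ 4 * φ ^ 2) := by
      have hne : H ^ 2 * (H * φ) ≠ 0 := mul_ne_zero (pow_ne_zero 2 hH) hHφ
      rw [hid]; positivity
    exact pos_of_mul_pos_right hpos (by positivity)

theorem denom_pos (H φ φ' ε : ℝ) (hε : ε = 1 ∨ ε = -1)
    (hφ' : φ' = -6 * φ * H ^ 3 + ε * Real.sqrt ((6 * φ * H ^ 3) ^ 2 + 3 * H ^ 2)) :
    2 - 8 * H * φ * φ' + 24 * H ^ 4 * φ ^ 2 > 0 :=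
  denom_pos_of_hamiltonian_constraint (hamiltonian_constraint_of_eq_root hε hφ')
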